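/- arXiv:2511.05447 — 4 statements merged into one kernel-verified Lean document; each statement's English description precedes it below -/
import Mathlib

section
/- Let ν denote the unique positive real root of the quartic ν⁴ + 4ν³ − 6ν² + 12ν − 3 = 0. For n ∈ ℤ and k ∈ ℕ define λ_{n,k} = ((4k+2)|n| + 4k(k+1))·(3 + 6ν² − ν⁴)/(4(1+ν²)) + n²(3+ν²)²/((1+ν²)(3−ν²)). Then λ_{0,0} = 0, and λ_{n,k} > 3 for every (n,k) ≠ (0,0). -/
/-- The eigenvalues `λ_{n,k}` of the Laplacian on the minimal Berger sphere `Σ₀`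
in the Page metric (normalized by `Ric(g) = 3g`). -/
noncomputable def pageLam (ν : ℝ) (n : ℤ) (k : ℕ) : ℝ :=
  ((4*(k:ℝ) + 2) * |(n:ℝ)| + 4*(k:ℝ)*((k:ℝ)+1)) * (3 + 6*ν^2 - ν^4) / (4*(1 + ν^2))
    + (n:ℝ)^2 * (3 + ν^2)^2 / ((1 + ν^2) * (3 - ν^2))

/-!
Write `λ_{n,k} = m · A(ν) + n² · B(ν)` with `m = (4k+2)|n| + 4k(k+1)`. For `0 < ν² < 3` one has
`A(ν) > 3/8`, since `8A - 3 = (3 + 9ν² - 2ν⁴)/(2(1+ν²))`, and `B(ν) > 3`, since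
`(3+ν²)² - 3(1+ν²)(3-ν²) = 4ν⁴`. If `n ≠ 0` the second term already exceeds `3`; if `n = 0` and
`k ≥ 1` then `m ≥ 8` and the first term exceeds `3`. The positive root of the quartic lies in
`(0, 1)`, so it is in this range.
-/

noncomputable def pageLamCoeffA (ν : ℝ) : ℝ := (3 + 6*ν^2 - ν^4) / (4*(1 + ν^2))

noncomputable def pageLamCoeffB (ν : ℝ) : ℝ := (3 + ν^2)^2 / ((1 + ν^2) * (3 - ν^2))

theorem pageLam_eq (ν : ℝ) (n : ℤ) (k : ℕ) :
    pageLam ν n k =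
      ((4*(k:ℝ) + 2) * |(n:ℝ)| + 4*(k:ℝ)*((k:ℝ)+1)) * pageLamCoeffA ν
        + (n:ℝ)^2 * pageLamCoeffB ν := by
  rw [pageLam, pageLamCoeffA, pageLamCoeffB, mul_div_assoc, mul_div_assoc]

theorem pageLam_zero_zero (ν : ℝ) : pageLam ν 0 0 = 0 := by
  simp [pageLam]

section

variable {ν : ℝ}

theorem three_eighths_lt_pageLamCoeffA (hν : ν^2 < 3) : 3/8 < pageLamCoeffA ν := by
  rw [pageLamCoeffA, lt_div_iff₀ (by positivity)]
  nlinarith [mul_nonneg (sq_nonneg ν) (by linarith : (0:ℝ) ≤ 9 - 2*ν^2)]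

theorem three_lt_pageLamCoeffB (hν₀ : ν ≠ 0) (hν : ν^2 < 3) : 3 < pageLamCoeffB ν := by
  have h4 : 0 < ν^4 := by positivity
  rw [pageLamCoeffB, lt_div_iff₀ (by nlinarith)]
  nlinarith

theorem three_lt_pageLam (hν₀ : ν ≠ 0) (hν : ν^2 < 3) {n : ℤ} {k : ℕ}
    (hnk : (n, k) ≠ ((0 : ℤ), (0 : ℕ))) : 3 < pageLam ν n k := by
  have hA := three_eighths_lt_pageLamCoeffA hν
  have hB := three_lt_pageLamCoeffB hν₀ hν
  have hk : (0:ℝ) ≤ k := k.cast_nonneg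
  rw [pageLam_eq]
  rcases eq_or_ne n 0 with rfl | hn
  · have hk₁ : (1:ℝ) ≤ k := by
      exact_mod_cast Nat.one_le_iff_ne_zero.mpr (by simpa using hnk)
    have hm : (8:ℝ) ≤ 4*(k:ℝ)*((k:ℝ)+1) := by nlinarith
    rw [Int.cast_zero, abs_zero]
    nlinarith
  · have hn₁ : (1:ℝ) ≤ |(n:ℝ)| := by exact_mod_cast Int.one_le_abs hn
    have hn₂ : (1:ℝ) ≤ (n:ℝ)^2 := by nlinarith [sq_abs (n:ℝ)]
    have hm : 0 ≤ (4*(k:ℝ) + 2) * |(n:ℝ)| + 4*(k:ℝ)*((k:ℝ)+1) := by positivity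
    nlinarith [mul_nonneg hm (by linarith : (0:ℝ) ≤ pageLamCoeffA ν)]

theorem lt_one_of_page_quartic_root (hroot : ν^4 + 4*ν^3 - 6*ν^2 + 12*ν - 3 = 0) :
    ν < 1 := by
  by_contra! h
  nlinarith [mul_nonneg (sub_nonneg.2 h) (sub_nonneg.2 h), pow_le_pow_left₀ zero_le_one h 3]

end

theorem page_stability_index_one_general (ν : ℝ) (hν : 0 < ν)
    (hroot : ν^4 + 4*ν^3 - 6*ν^2 + 12*ν - 3 = 0) :
    pageLam ν 0 0 = 0 ∧
    ∀ (n : ℤ) (k : ℕ), (n, k) ≠ ((0 : ℤ), (0 : ℕ)) → 3 < pageLam ν n k := by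
  have hν₁ := lt_one_of_page_quartic_root hroot
  have hν₂ : ν^2 < 3 := by nlinarith
  exact ⟨pageLam_zero_zero ν, fun n k hnk => three_lt_pageLam hν.ne' hν₂ hnk⟩

/-- Let `ν` be the unique positive real root of `ν⁴ + 4ν³ − 6ν² + 12ν − 3 = 0`.
Then `λ_{0,0} = 0` and `λ_{n,k} > 3` for every `(n,k) ≠ (0,0)`. -/
theorem page_stability_index_one (ν : ℝ) (hν : 0 < ν)
    (hroot : ν^4 + 4*ν^3 - 6*ν^2 + 12*ν - 3 = 0)
    (huniq : ∀ μ : ℝ, 0 < μ → μ^4 + 4*μ^3 - 6*μ^2 + 12*μ - 3 = 0 → μ = ν) :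
    pageLam ν 0 0 = 0 ∧
    ∀ (n : ℤ) (k : ℕ), (n, k) ≠ ((0 : ℤ), (0 : ℕ)) → 3 < pageLam ν n k :=
  page_stability_index_one_general ν hν hroot
end

section
/- For every b ∈ (0,1), the cubic H(y) = b + 6y − 15y² + 8y³ has exactly three real roots, all simple: exactly one in the interval (−1/8, 0), exactly one in the interval (1/4, 1), and exactly one in the interval (1, ∞); in particular H has exactly one negative root. -/
/-!
Since `H(−1/8) = b − 1 < 0 < b = H(0)`, `H(1/4) = b + 11/16 > 0 > b − 1 = H(1)` and
`H(2) = b + 16 > 0`, the intermediate value theorem gives roots `r₁ ∈ (−1/8, 0)`,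
`r₂ ∈ (1/4, 1)` and `r₃ ∈ (1, 2)`. Three distinct roots of a cubic with leading coefficient
`8` force `H(y) = 8(y − r₁)(y − r₂)(y − r₃)`, so these are all the roots, and only `r₁` is
negative.
-/

open Set

theorem exists_mem_Ioo_eq_zero_of_mul_neg {f : ℝ → ℝ} {u v : ℝ} (huv : u ≤ v)
    (hf : ContinuousOn f (Icc u v)) (hsign : f u * f v < 0) :
    ∃ r ∈ Ioo u v, f r = 0 := by
  rcases mul_neg_iff.1 hsign with ⟨hu, hv⟩ | ⟨hu, hv⟩
  · exact intermediate_value_Ioo' huv hf ⟨hv, hu⟩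
  · exact intermediate_value_Ioo huv hf ⟨hu, hv⟩

theorem cubic_eq_mul_of_roots {R : Type*} [CommRing R] [NoZeroDivisors R]
    {a₀ a₁ a₂ a₃ r₁ r₂ r₃ : R} (h₁₂ : r₁ ≠ r₂) (h₁₃ : r₁ ≠ r₃) (h₂₃ : r₂ ≠ r₃)
    (hr₁ : a₀ + a₁ * r₁ + a₂ * r₁ ^ 2 + a₃ * r₁ ^ 3 = 0)
    (hr₂ : a₀ + a₁ * r₂ + a₂ * r₂ ^ 2 + a₃ * r₂ ^ 3 = 0)
    (hr₃ : a₀ + a₁ * r₃ + a₂ * r₃ ^ 2 + a₃ * r₃ ^ 3 = 0) (y : R) :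
    a₀ + a₁ * y + a₂ * y ^ 2 + a₃ * y ^ 3 = a₃ * (y - r₁) * (y - r₂) * (y - r₃) := by
  have hV : (r₁ - r₂) * (r₁ - r₃) * (r₂ - r₃) ≠ 0 := by
    simp only [ne_eq, mul_eq_zero, sub_eq_zero, not_or]
    exact ⟨⟨h₁₂, h₁₃⟩, h₂₃⟩
  refine sub_eq_zero.1 ((mul_eq_zero.1 ?_).resolve_left hV)
  -- The difference has degree at most 2 and vanishes at the `rᵢ`: Lagrange interpolation,
  -- with denominators cleared by the Vandermonde factor.
  linear_combination (y - r₂) * (y - r₃) * (r₂ - r₃) * hr₁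
    - (y - r₁) * (y - r₃) * (r₁ - r₃) * hr₂ + (y - r₁) * (y - r₂) * (r₁ - r₂) * hr₃

/-- For every `b ∈ (0,1)`, the cubic `H(y) = b + 6y − 15y² + 8y³` has exactly
three real roots, all simple (witnessed by the factorization
`H(y) = 8(y − r₁)(y − r₂)(y − r₃)` with `r₁, r₂, r₃` pairwise distinct):
exactly one root in `(−1/8, 0)`, exactly one in `(1/4, 1)`, and exactly one in
`(1, ∞)`; in particular `H` has exactly one negative root. -/
theorem ypq_H_roots :
    ∀ b ∈ Set.Ioo (0 : ℝ) 1, ∃ r₁ r₂ r₃ : ℝ,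
      r₁ ∈ Set.Ioo (-1/8 : ℝ) 0 ∧ r₂ ∈ Set.Ioo (1/4 : ℝ) 1 ∧ r₃ ∈ Set.Ioi (1 : ℝ) ∧
      (∀ y : ℝ, b + 6*y - 15*y^2 + 8*y^3 = 8*(y - r₁)*(y - r₂)*(y - r₃)) ∧
      (∀ y : ℝ, b + 6*y - 15*y^2 + 8*y^3 = 0 ↔ (y = r₁ ∨ y = r₂ ∨ y = r₃)) ∧
      (∀ y : ℝ, y < 0 → b + 6*y - 15*y^2 + 8*y^3 = 0 → y = r₁) := by
  rintro b ⟨hb₀, hb₁⟩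
  have hH : Continuous fun y : ℝ => b + 6*y - 15*y^2 + 8*y^3 := by fun_prop
  obtain ⟨r₁, ⟨hr₁l, hr₁u⟩, hr₁⟩ := exists_mem_Ioo_eq_zero_of_mul_neg (u := -1/8) (v := 0)
    (by norm_num) hH.continuousOn (by norm_num; nlinarith)
  obtain ⟨r₂, ⟨hr₂l, hr₂u⟩, hr₂⟩ := exists_mem_Ioo_eq_zero_of_mul_neg (u := 1/4) (v := 1)
    (by norm_num) hH.continuousOn (by norm_num; nlinarith)
  obtain ⟨r₃, ⟨hr₃l, -⟩, hr₃⟩ := exists_mem_Ioo_eq_zero_of_mul_neg (u := 1) (v := 2)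
    (by norm_num) hH.continuousOn (by norm_num; nlinarith)
  have hfac (y : ℝ) : b + 6*y - 15*y^2 + 8*y^3 = 8*(y - r₁)*(y - r₂)*(y - r₃) := by
    have := cubic_eq_mul_of_roots (a₀ := b) (a₁ := 6) (a₂ := -15) (a₃ := 8)
      (r₁ := r₁) (r₂ := r₂) (r₃ := r₃)
      (by linarith) (by linarith) (by linarith)
      (by linear_combination hr₁) (by linear_combination hr₂) (by linear_combination hr₃) y
    linear_combination this
  have hroots (y : ℝ) : b + 6*y - 15*y^2 + 8*y^3 = 0 ↔ (y = r₁ ∨ y = r₂ ∨ y = r₃) := by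
    simp only [hfac, mul_eq_zero, sub_eq_zero, OfNat.ofNat_ne_zero, false_or, or_assoc]
  refine ⟨r₁, r₂, r₃, ⟨hr₁l, hr₁u⟩, ⟨hr₂l, hr₂u⟩, hr₃l, hfac, hroots, fun y hy hy₀ => ?_⟩
  rcases (hroots y).1 hy₀ with rfl | rfl | rfl <;> linarith
end

section
/- Let k ∈ ℕ with k ≥ 1, let N_ψ, N_φ ∈ ℤ, set n_ψ = N_ψ − N_φ, n_φ = N_ψ + N_φ, J = k + (|n_ψ| + |n_φ|)/2, E = J(J+1), and let y be a real number with −1/8 < y < 0. Then E − N_ψ² − 1 + 4y > 1/2 > 0. -/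
/-! Since `n_ψ + n_φ = 2 N_ψ`, the triangle inequality gives `J ≥ k + |N_ψ| ≥ 1 + |N_ψ|`, hence
`E = J (J + 1) ≥ N_ψ² + 3 |N_ψ| + 2`, and so `E − N_ψ² − 1 + 4y ≥ 1 + 4y > 1/2` once `y > −1/8`. -/

section

variable {α : Type*} [Field α] [LinearOrder α] [IsStrictOrderedRing α]

theorem two_mul_abs_le_abs_sub_add_abs_add (a b : α) : 2 * |a| ≤ |a - b| + |a + b| :=
  calc 2 * |a| = |(a - b) + (a + b)| := by rw [← abs_two, ← abs_mul]; ring_nf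
    _ ≤ |a - b| + |a + b| := abs_add_le _ _

theorem one_add_abs_le {k : α} (hk : 1 ≤ k) (a b : α) :
    1 + |a| ≤ k + (|a - b| + |a + b|) / 2 := by
  linarith [two_mul_abs_le_abs_sub_add_abs_add a b]

theorem sq_add_three_mul_abs_add_two_le {k : α} (hk : 1 ≤ k) (a b : α) :
    let J := k + (|a - b| + |a + b|) / 2
    a ^ 2 + 3 * |a| + 2 ≤ J * (J + 1) := by
  intro J
  have hJ : 1 + |a| ≤ J := one_add_abs_le hk a b
  calc a ^ 2 + 3 * |a| + 2 = (1 + |a|) * (1 + |a| + 1) := by rw [← sq_abs a]; ring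
    _ ≤ J * (J + 1) := by gcongr

end

theorem ypq_k_ge_one_stable_general (k : ℕ) (hk : 1 ≤ k) (Nψ Nφ : ℤ)
    (y : ℝ) (hy1 : -1/8 < y) :
    let nψ : ℝ := (Nψ : ℝ) - (Nφ : ℝ)
    let nφ : ℝ := (Nψ : ℝ) + (Nφ : ℝ)
    let J : ℝ := (k : ℝ) + (|nψ| + |nφ|)/2
    let E : ℝ := J * (J + 1)
    1/2 < E - (Nψ : ℝ)^2 - 1 + 4*y ∧ (0 : ℝ) < 1/2 := by
  intro nψ nφ J E
  have hE : (Nψ : ℝ) ^ 2 + 3 * |(Nψ : ℝ)| + 2 ≤ E :=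
    sq_add_three_mul_abs_add_two_le (by exact_mod_cast hk) (Nψ : ℝ) Nφ
  exact ⟨by linarith [abs_nonneg (Nψ : ℝ)], by norm_num⟩

/-- For `k ≥ 1`, `N_ψ, N_φ ∈ ℤ`, with `n_ψ = N_ψ − N_φ`, `n_φ = N_ψ + N_φ`,
`J = k + (|n_ψ| + |n_φ|)/2`, `E = J(J+1)`, and `y ∈ (−1/8, 0)`, one has
`E − N_ψ² − 1 + 4y > 1/2 > 0`. -/
theorem ypq_k_ge_one_stable (k : ℕ) (hk : 1 ≤ k) (Nψ Nφ : ℤ)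
    (y : ℝ) (hy1 : -1/8 < y) (hy2 : y < 0) :
    let nψ : ℝ := (Nψ : ℝ) - (Nφ : ℝ)
    let nφ : ℝ := (Nψ : ℝ) + (Nφ : ℝ)
    let J : ℝ := (k : ℝ) + (|nψ| + |nφ|)/2
    let E : ℝ := J * (J + 1)
    1/2 < E - (Nψ : ℝ)^2 - 1 + 4*y ∧ (0 : ℝ) < 1/2 :=
  ypq_k_ge_one_stable_general k hk Nψ Nφ y hy1
end

section
/- Let ε ∈ (0,1), let q be a positive integer, let m be an integer with q·|m| ≥ 2, and let y be a real number with −1/8 < y < 0. Then q²m²·((√(4 − 3ε²) + 3ε² − 2)/ε²)² − 6(1 − 4y)/(1 − y) > 0. -/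
/-! The eigenvalue is a product of two factors, `q²m² ≥ 4` and
`((√(4 - 3ε²) + 3ε² - 2)/ε²)² ≥ 4` (because `√(4 - 3s) ≥ 2 - s` for `0 ≤ s ≤ 1`), so it is at
least `16`, while the curvature term `6(1 - 4y)/(1 - y)` stays below `9` as long as
`-1/5 < y < 1`. -/

theorem two_sub_le_sqrt_four_sub_three_mul {s : ℝ} (hs0 : 0 ≤ s) (hs1 : s ≤ 1) :
    2 - s ≤ √(4 - 3 * s) :=
  Real.le_sqrt_of_sq_le (by nlinarith)

theorem two_le_sqrt_four_sub_three_mul_add_div {s : ℝ} (hs0 : 0 < s) (hs1 : s ≤ 1) :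
    2 ≤ (√(4 - 3 * s) + 3 * s - 2) / s := by
  rw [le_div_iff₀ hs0]
  linarith [two_sub_le_sqrt_four_sub_three_mul hs0.le hs1]

theorem six_mul_one_sub_four_mul_div_lt_nine {y : ℝ} (hy1 : -1/5 < y) (hy2 : y < 1) :
    6 * (1 - 4 * y) / (1 - y) < 9 := by
  rw [div_lt_iff₀ (by linarith)]
  linarith

theorem ypq_alpha_modes_stable_general (ε : ℝ) (hε : ε ∈ Set.Ioo (0 : ℝ) 1)
    (q : ℕ) (m : ℤ) (hm : 2 ≤ (q : ℤ) * |m|)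
    (y : ℝ) (hy1 : -1/8 < y) (hy2 : y < 0) :
    0 < (q : ℝ)^2 * (m : ℝ)^2 * ((Real.sqrt (4 - 3*ε^2) + 3*ε^2 - 2)/ε^2)^2
        - 6*(1 - 4*y)/(1 - y) := by
  obtain ⟨hε0, hε1⟩ := hε
  have hqm : 4 ≤ ((q : ℝ) * m) ^ 2 := by
    have : (2 : ℝ) ≤ |(q : ℝ) * m| := by
      rw [abs_mul, Nat.abs_cast]
      exact_mod_cast hm
    nlinarith [abs_nonneg ((q : ℝ) * m), sq_abs ((q : ℝ) * m)]
  have ht := two_le_sqrt_four_sub_three_mul_add_div (s := ε ^ 2) (by positivity)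
    (by nlinarith)
  have hcurv := six_mul_one_sub_four_mul_div_lt_nine (y := y) (by linarith) (by linarith)
  nlinarith

/-- Let `ε ∈ (0,1)`, `q` a positive integer, `m` an integer with `q·|m| ≥ 2`,
and `y ∈ (−1/8, 0)`. Then
`q²m²·((√(4 − 3ε²) + 3ε² − 2)/ε²)² − 6(1 − 4y)/(1 − y) > 0`. -/
theorem ypq_alpha_modes_stable (ε : ℝ) (hε : ε ∈ Set.Ioo (0 : ℝ) 1)
    (q : ℕ) (hq : 0 < q) (m : ℤ) (hm : 2 ≤ (q : ℤ) * |m|)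
    (y : ℝ) (hy1 : -1/8 < y) (hy2 : y < 0) :
    0 < (q : ℝ)^2 * (m : ℝ)^2 * ((Real.sqrt (4 - 3*ε^2) + 3*ε^2 - 2)/ε^2)^2
        - 6*(1 - 4*y)/(1 - y) :=
  ypq_alpha_modes_stable_general ε hε q m hm y hy1 hy2
end
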